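/- With 𝔊, 𝒢_{κ¹}, G² and 𝒫 as in the product construction below: Player 0 has a winning strategy from the initial vertex v_init in the augmented game 𝔊 if and only if Player 0 has a winning strategy from the initial vertex (v_init, u0) in the product game 𝒫. -/

import Mathlib

universe u

/-- A two-player game graph: finite-intended vertex set `V`, an ownership function
(`owner v = 0` means `v` is a Player-0 vertex, `owner v = 1` a Player-1 vertex),
and an edge relation such that every vertex has at least one outgoing edge. -/
structure GameGraph (V : Type u) where
  owner : V → Fin 2
  E : V → V → Prop
  exists_succ : ∀ v, ∃ w, E v w

variable {V : Type u}

/-- A play of the game graph: an infinite sequence of vertices following edges. -/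
def IsPlay (G : GameGraph V) (ρ : ℕ → V) : Prop :=
  ∀ k, G.E (ρ k) (ρ (k + 1))

/-- A (history-dependent) strategy: given the list of previously visited
vertices and the current vertex, it chooses a next vertex. -/
abbrev Strategy (V : Type u) := List V → V → V

/-- A strategy of Player `i` is valid if at each Player-`i` vertex it chooses
an edge of the game graph. -/
def StratValid (G : GameGraph V) (i : Fin 2) (σ : Strategy V) : Prop :=
  ∀ (h : List V) (v : V), G.owner v = i → G.E v (σ h v)

/-- A positional (memoryless) strategy ignores the history. -/
def Positional (σ : Strategy V) : Prop :=
  ∀ (h h' : List V) (v : V), σ h v = σ h' v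

/-- A play is compliant with the strategy `σ` of Player `i` (a `σ`-play) if at
every Player-`i` vertex it moves to the vertex chosen by `σ`. -/
def Compliant (G : GameGraph V) (i : Fin 2) (σ : Strategy V) (ρ : ℕ → V) : Prop :=
  ∀ k, G.owner (ρ k) = i → ρ (k + 1) = σ (List.ofFn fun j : Fin k => ρ j.val) (ρ k)

/-- `σ` is a winning strategy for Player `i` from `v`, where `W` is the set of
plays that are winning for Player `i`. -/
def WinsFrom (G : GameGraph V) (i : Fin 2) (W : Set (ℕ → V)) (σ : Strategy V) (v : V) : Prop :=
  StratValid G i σ ∧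
    ∀ ρ : ℕ → V, IsPlay G ρ → Compliant G i σ ρ → ρ 0 = v → ρ ∈ W

/-- The winning region of Player `i`: the vertices from which Player `i` has a
winning strategy. -/
def WinRegion (G : GameGraph V) (i : Fin 2) (W : Set (ℕ → V)) : Set V :=
  {v | ∃ σ, WinsFrom G i W σ v}

/-- A vertex occurs infinitely often along a play. -/
def InfOft (ρ : ℕ → V) (v : V) : Prop := ∀ n, ∃ k, n ≤ k ∧ ρ k = v

/-- An edge is taken infinitely often along a play. -/
def EdgeInfOft (ρ : ℕ → V) (e : V × V) : Prop :=
  ∀ n, ∃ k, n ≤ k ∧ ρ k = e.1 ∧ ρ (k + 1) = e.2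

/-- Parity objective: the maximal priority occurring infinitely often is even. -/
def ParityWin (P : V → ℕ) (ρ : ℕ → V) : Prop :=
  ∃ v, InfOft ρ v ∧ Even (P v) ∧ ∀ w, InfOft ρ w → P w ≤ P v

/-- The set of source vertices of a set of edges. -/
def srcSet (H : Set (V × V)) : Set V := {u | ∃ w, (u, w) ∈ H}

/-- Group transition fairness (live group) assumption: for every live group `H`,
if some source vertex of `H` occurs infinitely often, then some edge of `H` is
taken infinitely often. -/
def psiGlive (Hc : Set (Set (V × V))) (ρ : ℕ → V) : Prop :=
  ∀ H ∈ Hc, (∃ u ∈ srcSet H, InfOft ρ u) → ∃ e ∈ H, EdgeInfOft ρ e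

/-- Vertices of the small labeled augmented game graph `G²`: the Player-1 vertex
`u0`, and the Player-0 vertices `u_*` and `x_1, …, x_m`. -/
inductive U2 (m : ℕ) : Type
  | u0 : U2 m
  | ustar : U2 m
  | x : Fin m → U2 m

/-- The labeled edge relation of `𝒢_{κ¹}`: an edge `u → w` of `G` carries the
label `some i` (the letter `h_i`) if it belongs to the live group `H_i`, and the
label `none` (the letter `a`) otherwise. -/
def Ledge1 (G : GameGraph V) {m : ℕ} (Hs : Fin m → Set (V × V))
    (u w : V) (c : Option (Fin m)) : Prop :=
  G.E u w ∧ ((∃ i, c = some i ∧ (u, w) ∈ Hs i) ∨ (c = none ∧ ∀ i, (u, w) ∉ Hs i))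

/-- The labeled edge relation of `G²`: edges `(u0, x_i)` labeled `h_i` (these are
the live edges), and edges `(x_i, u0)`, `(u0, u_*)`, `(u_*, u0)` labeled `a`. -/
def Ledge2 {m : ℕ} : U2 m → U2 m → Option (Fin m) → Prop
  | U2.u0, U2.x i, c => c = some i
  | U2.x _, U2.u0, c => c = none
  | U2.u0, U2.ustar, c => c = none
  | U2.ustar, U2.u0, c => c = none
  | _, _, _ => False

/-- The edge relation of the product game `𝒫`: `(v,v') → (w,w')` iff for some
letter `c` both `v → w` is an edge of `𝒢_{κ¹}` labeled `c` and `v' → w'` is an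
edge of `G²` labeled `c`. -/
def Eprod (G : GameGraph V) {m : ℕ} (Hs : Fin m → Set (V × V))
    (p q : V × U2 m) : Prop :=
  ∃ c : Option (Fin m), Ledge1 G Hs p.1 q.1 c ∧ Ledge2 p.2 q.2 c

/-- The live group `H_{(u0, x_i)}` of the product game: all product edges whose
second components move from `u0` to `x_i`. -/
def Hprod (G : GameGraph V) {m : ℕ} (Hs : Fin m → Set (V × V)) (i : Fin m) :
    Set ((V × U2 m) × (V × U2 m)) :=
  {e | Eprod G Hs e.1 e.2 ∧ e.1.2 = U2.u0 ∧ e.2.2 = U2.x i}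

/-- The set `ℋ_𝒫 = {H_{(u0,x_i)} : i ∈ [1;m]}` of live groups of the product. -/
def HprodSet (G : GameGraph V) {m : ℕ} (Hs : Fin m → Set (V × V)) :
    Set (Set ((V × U2 m) × (V × U2 m))) :=
  {H | ∃ i : Fin m, H = Hprod G Hs i}

/-- First projection of a play of the product game. -/
def proj1 {m : ℕ} (ρ : ℕ → V × U2 m) : ℕ → V := fun n => (ρ n).1

/-- Ownership in the product game: the Player-0 vertices are those of
`V0 × {u_*, x_1, …, x_m}`, i.e. the pairs whose second component differs from
`u0`; the Player-1 vertices are those of `V1 × {u0}`. -/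
def ownerProd {m : ℕ} : V × U2 m → Fin 2 :=
  fun p => match p.2 with
    | U2.u0 => 1
    | _ => 0

/-- Player 0 has a winning strategy from `p0` in the product game `𝒫`: there is
a strategy choosing, at each Player-0 vertex of the product (that has a
successor), a product edge, such that every compliant play of `𝒫` from `p0` is
winning for Player 0 in `𝒫`. -/
def prodWin0From (G : GameGraph V) {m : ℕ} (Hs : Fin m → Set (V × V))
    (Φ : Set (ℕ → V)) (p0 : V × U2 m) : Prop :=
  ∃ σ : List (V × U2 m) → (V × U2 m) → (V × U2 m),
    (∀ (h : List (V × U2 m)) (p : V × U2 m), ownerProd p = 0 →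
      (∃ q, Eprod G Hs p q) → Eprod G Hs p (σ h p)) ∧
    ∀ ρ : ℕ → V × U2 m,
      (∀ n, Eprod G Hs (ρ n) (ρ (n + 1))) →
      (∀ n, ownerProd (ρ n) = 0 →
        ρ (n + 1) = σ (List.ofFn fun j : Fin n => ρ j.val) (ρ n)) →
      ρ 0 = p0 →
      (psiGlive (HprodSet G Hs) ρ → proj1 ρ ∈ Φ)

/-!
Along a play of the product from `(vinit, u0)` the `G²` component is `u0` exactly at the
Player-1 vertices of `G`, and after a Player-1 move it is `x_i` if the edge just taken lies in
`H_i` and `u_*` if it lies in no live group. So product plays are the lifts of plays of `G`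
with the same Player-0 choices, and the product live group `H_{(u0,x_i)}` is taken (or enabled)
infinitely often exactly when `H_i` is. Strategies are transferred by projecting, respectively
lifting, histories.
-/

lemma fin_two_eq_of_ne_of_ne {a b c d : Fin 2} (hab : a ≠ b) (hcd : c ≠ d) (hac : a = c) :
    b = d := by
  revert a b c d
  decide

lemma InfOft.comp {W : Type*} (f : V → W) {ρ : ℕ → V} {v : V} (h : InfOft ρ v) :
    InfOft (f ∘ ρ) (f v) := fun n =>
  let ⟨k, hk, hv⟩ := h n
  ⟨k, hk, by simp [hv]⟩

lemma EdgeInfOft.comp {W : Type*} (f : V → W) {ρ : ℕ → V} {e : V × V} (h : EdgeInfOft ρ e) :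
    EdgeInfOft (f ∘ ρ) (Prod.map f f e) := fun n =>
  let ⟨k, hk, h1, h2⟩ := h n
  ⟨k, hk, by simp [h1], by simp [h2]⟩

lemma psiGlive_setOf_eq_iff {ι : Type*} (Hs : ι → Set (V × V)) (ρ : ℕ → V) :
    psiGlive {H | ∃ i, H = Hs i} ρ ↔
      ∀ i, (∃ u ∈ srcSet (Hs i), InfOft ρ u) → ∃ e ∈ Hs i, EdgeInfOft ρ e := by
  simp [psiGlive]

lemma List.getD_ofFn_of_le {α : Type*} {n k : ℕ} (π : ℕ → α) (hk : k ≤ n) :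
    (List.ofFn fun j : Fin n => π j).getD k (π n) = π k := by
  rcases hk.lt_or_eq with hk | rfl
  · simp [List.getD_eq_getElem?_getD, hk]
  · simp [List.getD_eq_getElem?_getD]

section Product

variable {G : GameGraph V} {m : ℕ} {Hs : Fin m → Set (V × V)}

lemma ownerProd_eq_one_iff {p : V × U2 m} : ownerProd p = 1 ↔ p.2 = U2.u0 := by
  rcases p with ⟨v, _ | _ | i⟩ <;> simp [ownerProd]

lemma ownerProd_eq_zero_iff {p : V × U2 m} : ownerProd p = 0 ↔ p.2 ≠ U2.u0 := by
  rcases p with ⟨v, _ | _ | i⟩ <;> simp [ownerProd]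

lemma ledge2_u0_some_iff {t : U2 m} {i : Fin m} :
    Ledge2 U2.u0 t (some i) ↔ t = U2.x i := by
  cases t <;> simp [Ledge2, eq_comm]

lemma ledge2_to_u0 {t : U2 m} (ht : t ≠ U2.u0) : Ledge2 t U2.u0 none := by
  cases t <;> simp_all [Ledge2]

lemma Eprod.edge {p q : V × U2 m} (h : Eprod G Hs p q) : G.E p.1 q.1 :=
  let ⟨_, h1, _⟩ := h
  h1.1

lemma Eprod.ownerProd_ne {p q : V × U2 m} (h : Eprod G Hs p q) : ownerProd p ≠ ownerProd q := by
  obtain ⟨c, -, h2⟩ := h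
  rcases p with ⟨v, s⟩
  rcases q with ⟨w, t⟩
  cases s <;> cases t <;> simp_all [Ledge2, ownerProd]

lemma ownerProd_eq_owner_of_eprod (halt : ∀ u w : V, G.E u w → G.owner u ≠ G.owner w)
    {p q : V × U2 m} (hpq : Eprod G Hs p q) (hp : ownerProd p = G.owner p.1) :
    ownerProd q = G.owner q.1 :=
  fin_two_eq_of_ne_of_ne hpq.ownerProd_ne (halt _ _ hpq.edge) hp

lemma ownerProd_eq_owner_of_play (halt : ∀ u w : V, G.E u w → G.owner u ≠ G.owner w)
    {ρ : ℕ → V × U2 m} (hρ : ∀ n, Eprod G Hs (ρ n) (ρ (n + 1)))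
    (h0 : ownerProd (ρ 0) = G.owner (ρ 0).1) : ∀ n, ownerProd (ρ n) = G.owner (ρ n).1
  | 0 => h0
  | n + 1 => ownerProd_eq_owner_of_eprod halt (hρ n) (ownerProd_eq_owner_of_play halt hρ h0 n)

lemma Ledge1.eq_some_of_mem (hdisj : ∀ i j, i ≠ j → Disjoint (Hs i) (Hs j)) {u w : V}
    {c : Option (Fin m)} {i : Fin m} (h : Ledge1 G Hs u w c) (hi : (u, w) ∈ Hs i) :
    c = some i := by
  rcases h.2 with ⟨j, rfl, hj⟩ | ⟨-, hnot⟩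
  · by_contra hji
    exact Set.disjoint_left.mp (hdisj j i fun h => hji (h ▸ rfl)) hj hi
  · exact absurd hi (hnot i)

lemma Ledge1.mem_of_some {u w : V} {i : Fin m} (h : Ledge1 G Hs u w (some i)) :
    (u, w) ∈ Hs i := by
  rcases h.2 with ⟨j, hij, hj⟩ | ⟨hc, -⟩
  · exact Option.some_injective _ hij ▸ hj
  · exact absurd hc (Option.some_ne_none i)

lemma mem_Hs_of_mem_Hprod {p q : V × U2 m} {i : Fin m} (h : (p, q) ∈ Hprod G Hs i) :
    (p.1, q.1) ∈ Hs i := by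
  obtain ⟨⟨c, h1, h2⟩, hp, hq⟩ := h
  rw [hp, hq] at h2
  exact Ledge1.mem_of_some (h2 ▸ h1 : Ledge1 G Hs p.1 q.1 (some i))

lemma mk_mem_Hprod (hHE : ∀ i, ∀ e ∈ Hs i, G.E e.1 e.2) {u w : V} {i : Fin m}
    (h : (u, w) ∈ Hs i) : ((u, U2.u0), (w, U2.x i)) ∈ Hprod G Hs i :=
  ⟨⟨some i, ⟨hHE i _ h, Or.inl ⟨i, rfl, h⟩⟩, rfl⟩, rfl, rfl⟩

/-- The edge carries the letter `h_i` since the groups are disjoint, and in `G²` that letter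
is only read on `u0 → x_i`. -/
lemma mem_Hprod_of_eprod (hH1 : ∀ i, ∀ e ∈ Hs i, G.owner e.1 = 1)
    (hdisj : ∀ i j, i ≠ j → Disjoint (Hs i) (Hs j)) {p q : V × U2 m} {i : Fin m}
    (hpq : Eprod G Hs p q) (hp : ownerProd p = G.owner p.1) (h : (p.1, q.1) ∈ Hs i) :
    (p, q) ∈ Hprod G Hs i := by
  have hp2 : p.2 = U2.u0 := ownerProd_eq_one_iff.mp (hp.trans (hH1 i _ h))
  obtain ⟨c, h1, h2⟩ := hpq
  obtain rfl := h1.eq_some_of_mem hdisj h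
  have hq2 : q.2 = U2.x i := ledge2_u0_some_iff.mp (hp2 ▸ h2)
  exact ⟨⟨some i, h1, h2⟩, hp2, hq2⟩

lemma psiGlive_HprodSet_iff (hHE : ∀ i, ∀ e ∈ Hs i, G.E e.1 e.2)
    (hH1 : ∀ i, ∀ e ∈ Hs i, G.owner e.1 = 1) (hdisj : ∀ i j, i ≠ j → Disjoint (Hs i) (Hs j))
    {ρ : ℕ → V × U2 m} (hρ : ∀ n, Eprod G Hs (ρ n) (ρ (n + 1)))
    (hsync : ∀ n, ownerProd (ρ n) = G.owner (ρ n).1) :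
    psiGlive (HprodSet G Hs) ρ ↔ psiGlive {H | ∃ i, H = Hs i} (proj1 ρ) := by
  rw [HprodSet, psiGlive_setOf_eq_iff, psiGlive_setOf_eq_iff]
  refine forall_congr' fun i => imp_congr ⟨?_, ?_⟩ ⟨?_, ?_⟩
  · rintro ⟨p, ⟨q, hpq⟩, hp⟩
    exact ⟨p.1, ⟨q.1, mem_Hs_of_mem_Hprod hpq⟩, hp.comp Prod.fst⟩
  · rintro ⟨u, ⟨w, huw⟩, hu⟩
    refine ⟨(u, U2.u0), ⟨(w, U2.x i), mk_mem_Hprod hHE huw⟩, fun n => ?_⟩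
    obtain ⟨k, hk, hρk⟩ := hu n
    refine ⟨k, hk, Prod.ext hρk (ownerProd_eq_one_iff.mp ?_)⟩
    rw [hsync, ← hH1 i _ huw]
    exact congrArg G.owner hρk
  · rintro ⟨⟨p, q⟩, hpq, he⟩
    exact ⟨(p.1, q.1), mem_Hs_of_mem_Hprod hpq, he.comp Prod.fst⟩
  · rintro ⟨⟨u, w⟩, huw, he⟩
    refine ⟨_, mk_mem_Hprod hHE huw, fun n => ?_⟩
    obtain ⟨k, hk, hu, hw⟩ := he n
    replace hu : (ρ k).1 = u := hu
    replace hw : (ρ (k + 1)).1 = w := hw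
    have hmem : ((ρ k).1, (ρ (k + 1)).1) ∈ Hs i := by rwa [hu, hw]
    obtain ⟨-, hk2, hk2'⟩ := mem_Hprod_of_eprod hH1 hdisj (hρ k) (hsync k) hmem
    exact ⟨k, hk, Prod.ext hu hk2, Prod.ext hw hk2'⟩

lemma eprod_to_u0 (hH1 : ∀ i, ∀ e ∈ Hs i, G.owner e.1 = 1) {u w : V} {t : U2 m}
    (hu : G.owner u ≠ 1) (hE : G.E u w) (ht : t ≠ U2.u0) : Eprod G Hs (u, t) (w, U2.u0) :=
  ⟨none, ⟨hE, Or.inr ⟨rfl, fun i hi => hu (hH1 i _ hi)⟩⟩, ledge2_to_u0 ht⟩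

variable (G Hs) in
open Classical in
/-- The vertex of `G²` reached in the product when `G` takes the edge `u → v`. -/
noncomputable def g2Vertex (u v : V) : U2 m :=
  if G.owner v = 1 then U2.u0
  else if h : ∃ i, (u, v) ∈ Hs i then U2.x h.choose else U2.ustar

lemma ownerProd_g2Vertex (u v : V) : ownerProd (v, g2Vertex G Hs u v) = G.owner v := by
  unfold g2Vertex
  split_ifs with hv
  · exact hv.symm
  all_goals simp only [ownerProd]; omega

lemma eprod_g2Vertex (halt : ∀ u w : V, G.E u w → G.owner u ≠ G.owner w)
    (hH1 : ∀ i, ∀ e ∈ Hs i, G.owner e.1 = 1) {u v : V} (hE : G.E u v) (t : V) :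
    Eprod G Hs (u, g2Vertex G Hs t u) (v, g2Vertex G Hs u v) := by
  have hu := ownerProd_g2Vertex (G := G) (Hs := Hs) t u
  have hv := ownerProd_g2Vertex (G := G) (Hs := Hs) u v
  by_cases hu1 : G.owner u = 1
  · have hv1 : G.owner v ≠ 1 := fun h => halt u v hE (hu1.trans h.symm)
    have ht : g2Vertex G Hs t u = U2.u0 := ownerProd_eq_one_iff.mp (hu.trans hu1)
    rw [ht]
    unfold g2Vertex
    rw [if_neg hv1]
    split_ifs with hmem
    · exact ⟨some hmem.choose, ⟨hE, Or.inl ⟨_, rfl, hmem.choose_spec⟩⟩, rfl⟩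
    · exact ⟨none, ⟨hE, Or.inr ⟨rfl, fun i hi => hmem ⟨i, hi⟩⟩⟩, rfl⟩
  · have hv1 : G.owner v = 1 := by have := halt u v hE; omega
    have huv : g2Vertex G Hs u v = U2.u0 := ownerProd_eq_one_iff.mp (hv.trans hv1)
    rw [huv]
    exact eprod_to_u0 hH1 hu1 hE fun h => hu1 (hu.symm.trans (ownerProd_eq_one_iff.mpr h))

variable (G Hs) in
/-- The play of the product that follows the `G`-play `π` (the truncated `n - 1` makes `π 0`
its own predecessor). -/
noncomputable def liftPlay (π : ℕ → V) (n : ℕ) : V × U2 m :=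
  (π n, g2Vertex G Hs (π (n - 1)) (π n))

lemma ownerProd_liftPlay (π : ℕ → V) (n : ℕ) :
    ownerProd (liftPlay G Hs π n) = G.owner (π n) :=
  ownerProd_g2Vertex _ _

lemma liftPlay_zero (π : ℕ → V) (h : G.owner (π 0) = 1) : liftPlay G Hs π 0 = (π 0, U2.u0) :=
  Prod.ext rfl (ownerProd_eq_one_iff.mp ((ownerProd_liftPlay π 0).trans h))

lemma eprod_liftPlay (halt : ∀ u w : V, G.E u w → G.owner u ≠ G.owner w)
    (hH1 : ∀ i, ∀ e ∈ Hs i, G.owner e.1 = 1) {π : ℕ → V} (hπ : IsPlay G π) (n : ℕ) :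
    Eprod G Hs (liftPlay G Hs π n) (liftPlay G Hs π (n + 1)) :=
  eprod_g2Vertex halt hH1 (hπ n) _

lemma liftPlay_getD_ofFn (π : ℕ → V) {n k : ℕ} (hk : k ≤ n) :
    liftPlay G Hs ((List.ofFn fun j : Fin n => π j).getD · (π n)) k = liftPlay G Hs π k := by
  simp only [liftPlay, List.getD_ofFn_of_le π hk,
    List.getD_ofFn_of_le π ((k.sub_le 1).trans hk)]

variable (G Hs) in
open Classical in
/-- Player 0 plays `σ` on first components; the second branch only concerns product vertices
that are unreachable from `(vinit, u0)`. -/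
noncomputable def prodStrategy (σ : Strategy V) (h : List (V × U2 m)) (p : V × U2 m) :
    V × U2 m :=
  if G.owner p.1 = 0 then (σ (h.map Prod.fst) p.1, U2.u0)
  else if hq : ∃ q, Eprod G Hs p q then hq.choose else p

lemma prodStrategy_valid (hH1 : ∀ i, ∀ e ∈ Hs i, G.owner e.1 = 1) {σ : Strategy V}
    (hσ : StratValid G 0 σ) (h : List (V × U2 m)) (p : V × U2 m) (hp : ownerProd p = 0)
    (hq : ∃ q, Eprod G Hs p q) : Eprod G Hs p (prodStrategy G Hs σ h p) := by
  unfold prodStrategy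
  split_ifs with hp1
  · exact eprod_to_u0 hH1 (by omega) (hσ _ _ hp1) (ownerProd_eq_zero_iff.mp hp)
  · exact hq.choose_spec

lemma prodWin0From_of_winsFrom (halt : ∀ u w : V, G.E u w → G.owner u ≠ G.owner w)
    (hHE : ∀ i, ∀ e ∈ Hs i, G.E e.1 e.2) (hH1 : ∀ i, ∀ e ∈ Hs i, G.owner e.1 = 1)
    (hdisj : ∀ i j, i ≠ j → Disjoint (Hs i) (Hs j)) {Φ : Set (ℕ → V)} {vinit : V}
    (hvinit : G.owner vinit = 1) {σ : Strategy V}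
    (hσ : WinsFrom G 0 {ρ | psiGlive {H | ∃ i, H = Hs i} ρ → ρ ∈ Φ} σ vinit) :
    prodWin0From G Hs Φ (vinit, U2.u0) := by
  obtain ⟨hvalid, hwin⟩ := hσ
  refine ⟨prodStrategy G Hs σ, prodStrategy_valid hH1 hvalid, fun ρ hρ hcomp h0 hfair => ?_⟩
  have hsync := ownerProd_eq_owner_of_play halt hρ (by rw [h0]; exact hvinit.symm)
  refine hwin (proj1 ρ) (fun n => (hρ n).edge) (fun n (hn : G.owner (ρ n).1 = 0) => ?_)
    (by simp [proj1, h0])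
    ((psiGlive_HprodSet_iff hHE hH1 hdisj hρ hsync).mp hfair)
  have hnext := congrArg Prod.fst (hcomp n ((hsync n).trans hn))
  rw [prodStrategy, if_pos hn, List.map_ofFn] at hnext
  exact hnext

variable (G Hs) in
/-- Player 0 replays `σ` on the lift of the history `h ++ [v]`. -/
noncomputable def projStrategy (σ : List (V × U2 m) → V × U2 m → V × U2 m) : Strategy V :=
  fun h v =>
    (σ (List.ofFn fun j : Fin h.length => liftPlay G Hs (h.getD · v) j)
      (liftPlay G Hs (h.getD · v) h.length)).1

lemma projStrategy_ofFn (σ : List (V × U2 m) → V × U2 m → V × U2 m) (π : ℕ → V) (n : ℕ) :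
    projStrategy G Hs σ (List.ofFn fun j : Fin n => π j) (π n) =
      (σ (List.ofFn fun j : Fin n => liftPlay G Hs π j) (liftPlay G Hs π n)).1 := by
  simp only [projStrategy, List.length_ofFn]
  rw [liftPlay_getD_ofFn π le_rfl]
  congr 2
  exact List.ofFn_inj.mpr (funext fun j => liftPlay_getD_ofFn π j.isLt.le)

lemma projStrategy_valid (hH1 : ∀ i, ∀ e ∈ Hs i, G.owner e.1 = 1)
    {σ : List (V × U2 m) → V × U2 m → V × U2 m}
    (hσ : ∀ h p, ownerProd p = 0 → (∃ q, Eprod G Hs p q) → Eprod G Hs p (σ h p)) :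
    StratValid G 0 (projStrategy G Hs σ) := by
  intro h v hv
  let p := liftPlay G Hs (h.getD · v) h.length
  have hp1 : p.1 = v := List.getD_eq_default _ _ le_rfl
  have hp : ownerProd p = 0 := (ownerProd_liftPlay _ _).trans ((congrArg G.owner hp1).trans hv)
  obtain ⟨w, hw⟩ := G.exists_succ v
  have hq : Eprod G Hs (p.1, p.2) (w, U2.u0) :=
    eprod_to_u0 hH1 (by rw [hp1, hv]; decide) (hp1 ▸ hw) (ownerProd_eq_zero_iff.mp hp)
  have hE := (hσ (List.ofFn fun j : Fin h.length => liftPlay G Hs (h.getD · v) j) p hp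
    ⟨_, hq⟩).edge
  rwa [hp1] at hE

lemma winsFrom_of_prodWin0From (halt : ∀ u w : V, G.E u w → G.owner u ≠ G.owner w)
    (hHE : ∀ i, ∀ e ∈ Hs i, G.E e.1 e.2) (hH1 : ∀ i, ∀ e ∈ Hs i, G.owner e.1 = 1)
    (hdisj : ∀ i j, i ≠ j → Disjoint (Hs i) (Hs j)) {Φ : Set (ℕ → V)} {vinit : V}
    (hvinit : G.owner vinit = 1) (hwin : prodWin0From G Hs Φ (vinit, U2.u0)) :
    ∃ σ : Strategy V, WinsFrom G 0 {ρ | psiGlive {H | ∃ i, H = Hs i} ρ → ρ ∈ Φ} σ vinit := by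
  obtain ⟨σ, hvalid, hwin⟩ := hwin
  refine ⟨projStrategy G Hs σ, projStrategy_valid hH1 hvalid, fun π hπ hcomp h0 hfair => ?_⟩
  have hρ := eprod_liftPlay (Hs := Hs) halt hH1 hπ
  have hsync : ∀ n, ownerProd (liftPlay G Hs π n) = G.owner (π n) := ownerProd_liftPlay π
  refine hwin (liftPlay G Hs π) hρ (fun n hn => ?_) (h0 ▸ liftPlay_zero π (h0 ▸ hvinit))
    ((psiGlive_HprodSet_iff hHE hH1 hdisj hρ hsync).mpr hfair)
  have hown : G.owner (π n) = 0 := (hsync n).symm.trans hn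
  have hnext := hcomp n hown
  rw [projStrategy_ofFn] at hnext
  have hσn := hvalid (List.ofFn fun j : Fin n => liftPlay G Hs π j) _ hn ⟨_, hρ n⟩
  -- both candidate successors of a Player-0 product vertex sit at `u0`
  refine Prod.ext hnext ((ownerProd_eq_one_iff.mp ?_).trans (ownerProd_eq_one_iff.mp ?_).symm)
  · have := halt _ _ (hπ n)
    rw [hsync]
    omega
  · have := hσn.ownerProd_ne
    omega

end Product

theorem stmt10_general (V : Type) (G : GameGraph V)
    (halt : ∀ u w : V, G.E u w → G.owner u ≠ G.owner w)
    (m : ℕ) (Hs : Fin m → Set (V × V))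
    (hHE : ∀ i, ∀ e ∈ Hs i, G.E e.1 e.2)
    (hH1 : ∀ i, ∀ e ∈ Hs i, G.owner e.1 = 1)
    (hdisj : ∀ i j, i ≠ j → Disjoint (Hs i) (Hs j))
    (Φ : Set (ℕ → V))
    (vinit : V) (hvinit : G.owner vinit = 1) :
    (∃ σ : Strategy V,
        WinsFrom G 0 {ρ | psiGlive {H | ∃ i : Fin m, H = Hs i} ρ → ρ ∈ Φ} σ vinit) ↔
      prodWin0From G Hs Φ (vinit, U2.u0) :=
  ⟨fun ⟨_, hσ⟩ => prodWin0From_of_winsFrom halt hHE hH1 hdisj hvinit hσ,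
    winsFrom_of_prodWin0From halt hHE hH1 hdisj hvinit⟩

/-- With `𝔊`, `𝒢_{κ¹}`, `G²` and `𝒫` as in the product
construction, Player 0 has a winning strategy from the initial vertex `v_init`
in the augmented game `𝔊` iff Player 0 has a winning strategy from the initial
vertex `(v_init, u0)` of the product game `𝒫`. -/
theorem stmt10 (V : Type) [Fintype V] (G : GameGraph V)
    (halt : ∀ u w : V, G.E u w → G.owner u ≠ G.owner w)
    (m : ℕ) (Hs : Fin m → Set (V × V))
    (hHE : ∀ i, ∀ e ∈ Hs i, G.E e.1 e.2)
    (hH1 : ∀ i, ∀ e ∈ Hs i, G.owner e.1 = 1)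
    (hdisj : ∀ i j, i ≠ j → Disjoint (Hs i) (Hs j))
    (Φ : Set (ℕ → V))
    (vinit : V) (hvinit : G.owner vinit = 1) :
    (∃ σ : Strategy V,
        WinsFrom G 0 {ρ | psiGlive {H | ∃ i : Fin m, H = Hs i} ρ → ρ ∈ Φ} σ vinit) ↔
      prodWin0From G Hs Φ (vinit, U2.u0) :=
  stmt10_general V G halt m Hs hHE hH1 hdisj Φ vinit hvinit
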